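/- Let P = Pᵀ ≻ 0, Ā ∈ ℝ^{n×n} with P·Ā + Āᵀ·P ⪯ −γ₀·I for γ₀ > 0, and suppose for each k = 1,…,n there exist γ_k > 0, η_k > 0 with Σ_k η_k = γ₀ and δ̄_k·(P·D_k + D_k·P) ⪰ (γ_k − η_k)·I, where D_k is the diagonal matrix with 1 in position (k,k) and 0 elsewhere and δ̄_k > 0. Then for every diagonal matrix D = Σ_k δ_k·D_k with δ_k ∈ [0, δ̄_k], the matrix Ā − D satisfies P·(Ā−D) + (Ā−D)ᵀ·P ≺ 0 and is Hurwitz stable. -/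

import Mathlib

/-!
Write `δ k = t k * δbar k` with `t k ∈ [0, 1]`. Then `-(P (A - D) + (A - D)ᵀ P)` splits as the slack
`-γ₀ I - (P A + Aᵀ P) ⪰ 0` of the Lyapunov inequality, plus `∑ t k • LMI k ⪰ 0`, plus `c • I` with
`c = ∑ ((1 - t k) η k + t k γ k) > 0`; the `γ₀ I` is absorbed because `∑ η k = γ₀`. Hence it is
positive definite, and for a complex eigenvector `A v = μ v` the quadratic form
`v* (P A + Aᵀ P) v = 2 Re μ · v* P v` forces `Re μ < 0`.
-/

open Matrix

namespace Matrix

theorem PosDef.of_isEmpty {ι R : Type*} [IsEmpty ι] [Ring R] [PartialOrder R] [StarRing R]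
    (M : Matrix ι ι R) : M.PosDef :=
  ⟨by ext i; exact isEmptyElim i, fun x hx => absurd (Subsingleton.elim x 0) hx⟩

variable {ι : Type*} [Fintype ι]

theorem re_star_dotProduct_map_ofReal_mulVec (M : Matrix ι ι ℝ) (v : ι → ℂ) :
    (star v ⬝ᵥ M.map Complex.ofReal *ᵥ v).re
      = (fun i => (v i).re) ⬝ᵥ M *ᵥ (fun i => (v i).re)
        + (fun i => (v i).im) ⬝ᵥ M *ᵥ (fun i => (v i).im) := by
  simp only [dotProduct, mulVec, map_apply, Pi.star_apply]
  rw [Complex.re_sum, ← Finset.sum_add_distrib]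
  refine Finset.sum_congr rfl fun j _ => ?_
  rw [Finset.mul_sum, Complex.re_sum, Finset.mul_sum, Finset.mul_sum, ← Finset.sum_add_distrib]
  refine Finset.sum_congr rfl fun k _ => ?_
  simp [Complex.mul_re, Complex.mul_im]

theorem PosDef.re_star_dotProduct_map_ofReal_mulVec_pos {M : Matrix ι ι ℝ} (hM : M.PosDef)
    {v : ι → ℂ} (hv : v ≠ 0) : 0 < (star v ⬝ᵥ M.map Complex.ofReal *ᵥ v).re := by
  rw [re_star_dotProduct_map_ofReal_mulVec]
  have hre := hM.posSemidef.dotProduct_mulVec_nonneg (fun i => (v i).re)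
  have him := hM.posSemidef.dotProduct_mulVec_nonneg (fun i => (v i).im)
  simp only [star_trivial] at hre him
  by_cases hx : (fun i => (v i).re) = 0
  · have hy : (fun i => (v i).im) ≠ 0 := fun hy =>
      hv (funext fun i => Complex.ext (congrFun hx i) (congrFun hy i))
    simpa [hx] using hM.dotProduct_mulVec_pos hy
  · have := hM.dotProduct_mulVec_pos hx
    simp only [star_trivial] at this
    linarith

variable [DecidableEq ι]

theorem mul_diagonal_add_diagonal_mul_eq_sum {R : Type*} [CommSemiring R]
    (P : Matrix ι ι R) (d : ι → R) :
    P * diagonal d + diagonal d * P = ∑ k, d k • (P * single k k 1 + single k k 1 * P) := by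
  rw [← sum_single_eq_diagonal, Finset.mul_sum, Finset.sum_mul, ← Finset.sum_add_distrib]
  refine Finset.sum_congr rfl fun k _ => ?_
  rw [smul_add, ← mul_smul_comm, ← smul_mul_assoc, smul_single, smul_eq_mul, mul_one]

theorem neg_lyapunov_sub_diagonal_eq {R : Type*} [CommRing R] (P A : Matrix ι ι R) (γ₀ : R)
    (γ η δbar δ t : ι → R) (hsum : ∑ k, η k = γ₀) (ht : ∀ k, t k * δbar k = δ k) :
    -(P * (A - diagonal δ) + (A - diagonal δ)ᵀ * P) =
      (-γ₀ • 1 - (P * A + Aᵀ * P))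
        + ∑ k, t k • (δbar k • (P * single k k 1 + single k k 1 * P) - (γ k - η k) • 1)
        + (∑ k, (η k + t k * (γ k - η k))) • 1 := by
  have hLMI : ∑ k, t k • (δbar k • (P * single k k 1 + single k k 1 * P) - (γ k - η k) • 1)
      = (P * diagonal δ + diagonal δ * P) - (∑ k, t k * (γ k - η k)) • 1 := by
    rw [mul_diagonal_add_diagonal_mul_eq_sum, Finset.sum_smul, ← Finset.sum_sub_distrib]
    refine Finset.sum_congr rfl fun k _ => ?_
    rw [smul_sub, smul_smul, smul_smul, ht]
  rw [hLMI, Finset.sum_add_distrib, hsum, add_smul, transpose_sub, diagonal_transpose, mul_sub,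
    sub_mul]
  module

theorem posDef_neg_lyapunov_sub_diagonal {P A : Matrix ι ι ℝ} {γ₀ : ℝ} {γ η δbar δ : ι → ℝ}
    (hLyap : (-γ₀ • (1 : Matrix ι ι ℝ) - (P * A + Aᵀ * P)).PosSemidef)
    (hγ : ∀ k, 0 < γ k) (hη : ∀ k, 0 < η k) (hsum : ∑ k, η k = γ₀)
    (hLMI : ∀ k, (δbar k • (P * single k k (1 : ℝ) + single k k (1 : ℝ) * P)
        - (γ k - η k) • (1 : Matrix ι ι ℝ)).PosSemidef)
    (hδ : ∀ k, 0 ≤ δ k ∧ δ k ≤ δbar k) :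
    (-(P * (A - diagonal δ) + (A - diagonal δ)ᵀ * P)).PosDef := by
  cases isEmpty_or_nonempty ι
  · exact PosDef.of_isEmpty _
  set t : ι → ℝ := fun k => δ k / δbar k
  have ht0 (k : ι) : 0 ≤ t k := div_nonneg (hδ k).1 ((hδ k).1.trans (hδ k).2)
  have ht1 (k : ι) : t k ≤ 1 := div_le_one_of_le₀ (hδ k).2 ((hδ k).1.trans (hδ k).2)
  have htδ (k : ι) : t k * δbar k = δ k :=
    div_mul_cancel_of_imp fun h => le_antisymm (h ▸ (hδ k).2) (hδ k).1
  -- `η k + t k * (γ k - η k) = (1 - t k) * η k + t k * γ k` is a convex combination of positives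
  have hc (k : ι) : 0 < η k + t k * (γ k - η k) := by
    rcases (ht1 k).eq_or_lt with h | h
    · rw [h]; linarith [hγ k]
    · nlinarith [mul_pos (sub_pos.mpr h) (hη k), mul_nonneg (ht0 k) (hγ k).le]
  rw [neg_lyapunov_sub_diagonal_eq P A γ₀ γ η δbar δ t hsum htδ]
  exact PosDef.posSemidef_add (hLyap.add (posSemidef_sum _ fun k _ => (hLMI k).smul (ht0 k)))
    (PosDef.one.smul (Finset.sum_pos (fun k _ => hc k) Finset.univ_nonempty))

theorem exists_mulVec_eq_smul_of_mem_spectrum {K : Type*} [Field K] {A : Matrix ι ι K} {μ : K}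
    (h : μ ∈ spectrum K A) : ∃ v ≠ 0, A *ᵥ v = μ • v := by
  rw [← spectrum_toLin', ← Module.End.hasEigenvalue_iff_mem_spectrum] at h
  obtain ⟨v, hv⟩ := h.exists_hasEigenvector
  exact ⟨v, hv.2, by simpa using hv.apply_eq_smul⟩

theorem re_lt_zero_of_mem_spectrum_of_lyapunov {P A : Matrix ι ι ℝ} (hP : P.PosDef)
    (hA : (-(P * A + Aᵀ * P)).PosDef) {μ : ℂ}
    (hμ : μ ∈ spectrum ℂ (A.map Complex.ofReal)) : μ.re < 0 := by
  obtain ⟨v, hv, hAv⟩ := exists_mulVec_eq_smul_of_mem_spectrum hμ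
  set Ac := A.map Complex.ofReal
  set Pc := P.map Complex.ofReal
  have hAcH : Acᴴ = Aᵀ.map Complex.ofReal := by
    ext i j
    simp [Ac, conjTranspose_apply]
  have hmap : (-(P * A + Aᵀ * P)).map Complex.ofReal = -(Pc * Ac + Acᴴ * Pc) := by
    rw [hAcH]
    ext i j
    simp [Pc, Ac, mul_apply]
  have hPA : star v ⬝ᵥ (Pc * Ac) *ᵥ v = μ * (star v ⬝ᵥ Pc *ᵥ v) := by
    rw [← mulVec_mulVec, hAv, mulVec_smul, dotProduct_smul, smul_eq_mul]
  have hAP : star v ⬝ᵥ (Acᴴ * Pc) *ᵥ v = star μ * (star v ⬝ᵥ Pc *ᵥ v) := by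
    rw [← mulVec_mulVec, dotProduct_mulVec, ← star_mulVec, hAv, star_smul, smul_dotProduct,
      smul_eq_mul]
  have hquad : star v ⬝ᵥ ((-(P * A + Aᵀ * P)).map Complex.ofReal) *ᵥ v
      = -((2 * μ.re : ℝ) * (star v ⬝ᵥ Pc *ᵥ v)) := by
    rw [hmap, neg_mulVec, dotProduct_neg, add_mulVec, dotProduct_add, hPA, hAP, ← add_mul,
      Complex.star_def, Complex.add_conj]
  have hneg := hA.re_star_dotProduct_map_ofReal_mulVec_pos hv
  have hpos := hP.re_star_dotProduct_map_ofReal_mulVec_pos hv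
  rw [hquad, Complex.neg_re, Complex.re_ofReal_mul] at hneg
  nlinarith

end Matrix

theorem stmt8_general {n : ℕ} (P Abar : Matrix (Fin n) (Fin n) ℝ)
    (hPpd : P.PosDef)
    (γ₀ : ℝ)
    (hLyap : (-(γ₀ : ℝ) • (1 : Matrix (Fin n) (Fin n) ℝ)
        - (P * Abar + Abarᵀ * P)).PosSemidef)
    (γ η δbar : Fin n → ℝ)
    (hγ : ∀ k, 0 < γ k) (hη : ∀ k, 0 < η k)
    (hsum : ∑ k, η k = γ₀)
    (hLMI : ∀ k, (δbar k •
        (P * Matrix.single k k (1 : ℝ) + Matrix.single k k (1 : ℝ) * P)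
        - (γ k - η k) • (1 : Matrix (Fin n) (Fin n) ℝ)).PosSemidef)
    (δ : Fin n → ℝ) (hδ : ∀ k, 0 ≤ δ k ∧ δ k ≤ δbar k) :
    (-(P * (Abar - Matrix.diagonal δ) + (Abar - Matrix.diagonal δ)ᵀ * P)).PosDef ∧
      (∀ μ ∈ spectrum ℂ ((Abar - Matrix.diagonal δ).map (Complex.ofReal)), μ.re < 0) := by
  have hstab := posDef_neg_lyapunov_sub_diagonal hLyap hγ hη hsum hLMI hδ
  exact ⟨hstab, fun μ hμ => re_lt_zero_of_mem_spectrum_of_lyapunov hPpd hstab hμ⟩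

theorem stmt8 {n : ℕ} (P Abar : Matrix (Fin n) (Fin n) ℝ)
    (hP : P.IsHermitian) (hPpd : P.PosDef)
    (γ₀ : ℝ) (hγ₀ : 0 < γ₀)
    (hLyap : (-(γ₀ : ℝ) • (1 : Matrix (Fin n) (Fin n) ℝ)
        - (P * Abar + Abarᵀ * P)).PosSemidef)
    (γ η δbar : Fin n → ℝ)
    (hγ : ∀ k, 0 < γ k) (hη : ∀ k, 0 < η k) (hδbar : ∀ k, 0 < δbar k)
    (hsum : ∑ k, η k = γ₀)
    (hLMI : ∀ k, (δbar k •
        (P * Matrix.single k k (1 : ℝ) + Matrix.single k k (1 : ℝ) * P)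
        - (γ k - η k) • (1 : Matrix (Fin n) (Fin n) ℝ)).PosSemidef)
    (δ : Fin n → ℝ) (hδ : ∀ k, 0 ≤ δ k ∧ δ k ≤ δbar k) :
    (-(P * (Abar - Matrix.diagonal δ) + (Abar - Matrix.diagonal δ)ᵀ * P)).PosDef ∧
      (∀ μ ∈ spectrum ℂ ((Abar - Matrix.diagonal δ).map (Complex.ofReal)), μ.re < 0) :=
  stmt8_general P Abar hPpd γ₀ hLyap γ η δbar hγ hη hsum hLMI δ hδ
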